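/- arXiv:2505.10374 — 3 statements merged into one kernel-verified Lean document; each statement's English description precedes it below -/
import Mathlib

section
/- The object S_{−∞,∞} of S (the sequence that is k in every degree, with transition maps (−1)^i·id_k) is not a projective object of S. -/
open CategoryTheory CategoryTheory.Limits

set_option linter.unusedVariables false

/-- The category `S` of sequences of `k`-vector spaces: functors from `ℤ`
(viewed as a poset category) to `k`-vector spaces. -/
abbrev SeqCat (k : Type) [Field k] := ℤ ⥤ ModuleCat k

variable {k : Type} [Field k]

/-- The transition map `d_V^i : V^i ⟶ V^{i+1}` of a sequence `V`. -/
noncomputable def SeqCat.d (V : SeqCat k) (i : ℤ) : V.obj i ⟶ V.obj (i + 1) :=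
  V.map (homOfLE (by omega))

variable (k)

/-- The component in degree `i` of the sequence `S_{a,b}` (for `a ∈ ℤ ∪ {−∞}`,
`b ∈ ℤ ∪ {∞}`), as a submodule of `k`: it is all of `k` if `a ≤ i ≤ b` and `0`
otherwise. -/
noncomputable def SabObj (a : WithBot ℤ) (b : WithTop ℤ) (i : ℤ) : Submodule k k :=
  if a ≤ (i : WithBot ℤ) ∧ (i : WithTop ℤ) ≤ b then ⊤ else ⊥

lemma SabObj_coe_eq_zero {a : WithBot ℤ} {b : WithTop ℤ} {i : ℤ}
    (h : ¬ (a ≤ (i : WithBot ℤ) ∧ (i : WithTop ℤ) ≤ b)) (x : ↥(SabObj k a b i)) :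
    (x : k) = 0 := by
  have hm := x.2
  have he : SabObj k a b i = ⊥ := if_neg h
  exact (Submodule.eq_bot_iff _).1 he _ hm

/-- The transition maps of the sequence `S_{a,b}`: the map from degree `i` to degree `j`
is multiplication by `∏_{m=i}^{j-1} (-1)^m`, i.e. the composite of the maps
`(-1)^m · id` for `i ≤ m < j` (and it is zero when forced to be, i.e. when the target
component vanishes). -/
noncomputable def SabMap (a : WithBot ℤ) (b : WithTop ℤ) (i j : ℤ) :
    ↥(SabObj k a b i) →ₗ[k] ↥(SabObj k a b j) where
  toFun x := if h : a ≤ (j : WithBot ℤ) ∧ (j : WithTop ℤ) ≤ b then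
      ⟨(∏ m ∈ Finset.Ico i j, (-1 : k) ^ m) * (x : k), by
        rw [SabObj, if_pos h]; trivial⟩
    else 0
  map_add' x y := by
    by_cases h : a ≤ (j : WithBot ℤ) ∧ (j : WithTop ℤ) ≤ b
    · simp only [dif_pos h]
      ext
      push_cast
      ring
    · simp only [dif_neg h, add_zero]
  map_smul' c x := by
    by_cases h : a ≤ (j : WithBot ℤ) ∧ (j : WithTop ℤ) ≤ b
    · simp only [dif_pos h, RingHom.id_apply]
      ext
      simp [smul_eq_mul]
      ring
    · simp only [dif_neg h, smul_zero, RingHom.id_apply]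

lemma SabMap_id (a : WithBot ℤ) (b : WithTop ℤ) (i : ℤ) :
    SabMap k a b i i = LinearMap.id := by
  apply LinearMap.ext
  intro x
  by_cases h : a ≤ (i : WithBot ℤ) ∧ (i : WithTop ℤ) ≤ b
  · apply Subtype.ext
    simp [SabMap, h]
  · apply Subtype.ext
    simp [SabMap, h, SabObj_coe_eq_zero k h x]

lemma SabMap_comp (a : WithBot ℤ) (b : WithTop ℤ) {i j l : ℤ}
    (hij : i ≤ j) (hjl : j ≤ l) :
    (SabMap k a b j l).comp (SabMap k a b i j) = SabMap k a b i l := by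
  apply LinearMap.ext
  intro x
  by_cases hl : a ≤ (l : WithBot ℤ) ∧ (l : WithTop ℤ) ≤ b
  · by_cases hj : a ≤ (j : WithBot ℤ) ∧ (j : WithTop ℤ) ≤ b
    · apply Subtype.ext
      simp only [LinearMap.comp_apply, SabMap, LinearMap.coe_mk, AddHom.coe_mk,
        dif_pos hl, dif_pos hj]
      have key : (∏ m ∈ Finset.Ico i j, (-1 : k) ^ m) * (∏ m ∈ Finset.Ico j l, (-1 : k) ^ m)
          = ∏ m ∈ Finset.Ico i l, (-1 : k) ^ m := by
        rw [← Finset.prod_union (Finset.Ico_disjoint_Ico_consecutive i j l),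
          Finset.Ico_union_Ico_eq_Ico hij hjl]
      rw [← key]
      ring
    · have hi : ¬ (a ≤ (i : WithBot ℤ) ∧ (i : WithTop ℤ) ≤ b) := by
        intro hi
        exact hj ⟨le_trans hi.1 (by exact_mod_cast hij),
          le_trans (by exact_mod_cast hjl) hl.2⟩
      apply Subtype.ext
      simp [SabMap, hl, hj, SabObj_coe_eq_zero k hi x]
  · apply Subtype.ext
    simp [SabMap, hl]

/-- The sequence `S_{a,b}` for `a ∈ ℤ ∪ {−∞}` and `b ∈ ℤ ∪ {∞}`: its component in
degree `i` is `k` for `a ≤ i ≤ b` and `0` otherwise, and the transition map in degree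
`i` (within the interval) is `(-1)^i · id_k`. -/
noncomputable def Sab (a : WithBot ℤ) (b : WithTop ℤ) : SeqCat k where
  obj i := ModuleCat.of k (SabObj k a b i)
  map {i j} f := ModuleCat.ofHom (SabMap k a b i j)
  map_id i := ModuleCat.hom_ext (SabMap_id k a b i)
  map_comp {i j l} f g := ModuleCat.hom_ext (SabMap_comp k a b (leOfHom f) (leOfHom g)).symm

/-- The condition `a ≤ b` for `a ∈ ℤ ∪ {−∞}` and `b ∈ ℤ ∪ {∞}`: the interval `[a,b]`
contains some integer. -/
def SabLE (a : WithBot ℤ) (b : WithTop ℤ) : Prop :=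
  ∃ i : ℤ, a ≤ (i : WithBot ℤ) ∧ (i : WithTop ℤ) ≤ b

/-! Let `F^i` be the space of finitely supported functions on `(−∞, i]`, with the
inclusions twisted by the signs of `S_{−∞,∞}` as transition maps; summing the coordinates is
an epimorphism `F ⟶ S_{−∞,∞}`. If `S_{−∞,∞}` were projective, the identity would factor
through `F`. But every element of `S_{−∞,∞}^i` comes from every earlier degree `j`, so its
image in `F^i` is supported in `(−∞, j]` for all `j`, hence vanishes: every morphism
`S_{−∞,∞} ⟶ F` is zero. -/

noncomputable section

def signFactor (i j : ℤ) : k := ∏ m ∈ Finset.Ico i j, (-1 : k) ^ m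

lemma signFactor_ne_zero (i j : ℤ) : signFactor k i j ≠ 0 :=
  Finset.prod_ne_zero_iff.2 fun _ _ => zpow_ne_zero _ (neg_ne_zero.2 one_ne_zero)

lemma signFactor_self (i : ℤ) : signFactor k i i = 1 := by
  simp [signFactor]

lemma signFactor_mul_signFactor {i j l : ℤ} (hij : i ≤ j) (hjl : j ≤ l) :
    signFactor k i j * signFactor k j l = signFactor k i l := by
  rw [signFactor, signFactor, signFactor,
    ← Finset.prod_union (Finset.Ico_disjoint_Ico_consecutive i j l),
    Finset.Ico_union_Ico_eq_Ico hij hjl]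

lemma Sab_bot_map_surjective (b : WithTop ℤ) ⦃i j : ℤ⦄ (h : i ≤ j) :
    Function.Surjective ((Sab k ⊥ b).map (homOfLE h)) := by
  change Function.Surjective (SabMap k ⊥ b i j)
  intro y
  by_cases hj : (⊥ : WithBot ℤ) ≤ (j : WithBot ℤ) ∧ (j : WithTop ℤ) ≤ b
  · have hi : (i : WithTop ℤ) ≤ b := le_trans (by exact_mod_cast h) hj.2
    refine ⟨⟨(signFactor k i j)⁻¹ * y, by rw [SabObj, if_pos ⟨bot_le, hi⟩]; trivial⟩, ?_⟩
    apply Subtype.ext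
    simp only [SabMap, dif_pos hj, LinearMap.coe_mk, AddHom.coe_mk]
    rw [← signFactor, mul_inv_cancel_left₀ (signFactor_ne_zero k i j)]
  · refine ⟨0, Subtype.ext ?_⟩
    rw [map_zero, SabObj_coe_eq_zero k hj y]
    rfl

lemma id_Sab_ne_zero {a : WithBot ℤ} {b : WithTop ℤ} (hab : SabLE a b) :
    𝟙 (Sab k a b) ≠ 0 := by
  obtain ⟨i, hi⟩ := hab
  intro h
  have h1 := LinearMap.congr_fun (congrArg (fun f : Sab k a b ⟶ Sab k a b => (f.app i).hom) h)
    (⟨1, by rw [SabObj, if_pos hi]; trivial⟩ : SabObj k a b i)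
  exact one_ne_zero (congrArg (Subtype.val : SabObj k a b i → k) h1)

lemma Finsupp.eq_zero_of_forall_mem_supported_Iic {R M : Type*} [Semiring R] [AddCommMonoid M]
    [Module R M] {v : ℤ →₀ M} {i : ℤ} (h : ∀ j ≤ i, v ∈ Finsupp.supported M R (Set.Iic j)) :
    v = 0 := by
  ext n
  refine (Finsupp.mem_supported' R v).1 (h (min (n - 1) i) (min_le_right _ _)) n ?_
  simp only [Set.mem_Iic, not_le]
  omega

def freeSeq : SeqCat k where
  obj i := ModuleCat.of k (Finsupp.supported k k (Set.Iic i))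
  map {i j} f := ModuleCat.ofHom <| signFactor k i j •
    Submodule.inclusion (Finsupp.supported_mono (Set.Iic_subset_Iic.2 (leOfHom f)))
  map_id i := by
    ext x : 3
    simp [signFactor_self]
  map_comp {i j l} f g := by
    ext x : 3
    simp [smul_smul, mul_comm, signFactor_mul_signFactor k (leOfHom f) (leOfHom g)]

lemma hom_freeSeq_eq_zero {V : SeqCat k}
    (hV : ∀ ⦃i j : ℤ⦄ (h : i ≤ j), Function.Surjective (V.map (homOfLE h)))
    (s : V ⟶ freeSeq k) : s = 0 := by
  ext i x : 4
  change s.app i x = 0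
  refine Subtype.ext (Finsupp.eq_zero_of_forall_mem_supported_Iic (R := k) (i := i) fun j hj => ?_)
  obtain ⟨y, rfl⟩ := hV hj x
  rw [NatTrans.naturality_apply]
  exact Submodule.smul_mem _ _ (s.app j y).2

lemma SabObj_bot_top (i : ℤ) : SabObj k ⊥ ⊤ i = ⊤ :=
  if_pos ⟨bot_le, le_top⟩

lemma SabMap_bot_top_apply (i j : ℤ) (x : SabObj k ⊥ ⊤ i) :
    (SabMap k ⊥ ⊤ i j x : k) = signFactor k i j * x := by
  simp [SabMap, signFactor]

def sumCoeffs (i : ℤ) : Finsupp.supported k k (Set.Iic i) →ₗ[k] SabObj k ⊥ ⊤ i :=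
  LinearMap.codRestrict _ ((Finsupp.lsum k fun _ => LinearMap.id).comp (Submodule.subtype _))
    fun _ => SabObj_bot_top k i ▸ Submodule.mem_top

lemma sumCoeffs_surjective (i : ℤ) : Function.Surjective (sumCoeffs k i) := fun y =>
  ⟨⟨Finsupp.single i y, Finsupp.single_mem_supported k _ (Set.mem_Iic.2 le_rfl)⟩,
    Subtype.ext (by simp [sumCoeffs])⟩

def freeSeqToSab : freeSeq k ⟶ Sab k ⊥ ⊤ where
  app i := ModuleCat.ofHom (sumCoeffs k i)
  naturality {i j} f := by
    ext x : 3
    apply Subtype.ext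
    change (sumCoeffs k j (signFactor k i j • _) : k) = (SabMap k ⊥ ⊤ i j (sumCoeffs k i x) : k)
    rw [map_smul, SetLike.val_smul, smul_eq_mul, SabMap_bot_top_apply]
    rfl

instance : Epi (freeSeqToSab k) :=
  have (i : ℤ) : Epi ((freeSeqToSab k).app i) :=
    (ModuleCat.epi_iff_surjective _).2 (sumCoeffs_surjective k i)
  NatTrans.epi_of_epi_app _

end

/-- The object `S_{−∞,∞}` of `S` (the sequence that is `k` in every degree, with
transition maps `(−1)^i·id_k`) is not a projective object of `S`. -/
theorem Sbotinfty_not_projective :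
    ¬ Projective (Sab k (⊥ : WithBot ℤ) (⊤ : WithTop ℤ)) := by
  intro _
  obtain ⟨s, hs⟩ := Projective.factors (𝟙 (Sab k ⊥ ⊤)) (freeSeqToSab k)
  rw [hom_freeSeq_eq_zero k (Sab_bot_map_surjective k ⊤) s, zero_comp] at hs
  exact id_Sab_ne_zero k ⟨0, bot_le, le_top⟩ hs.symm
end

section
/- For every m ∈ ℤ ∪ {−∞}, every nonzero subobject of S_{m,∞} in S is either S_{m,∞} itself or equal to the canonical subobject of S_{m,∞} consisting of the components in degrees ≥ n (which is isomorphic to S_{n,∞}) for some integer n ≥ m. -/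
/-! Each component of `S_{m,∞}` is `0` or the simple module `k`, so each component of the image
of `f` is `0` or everything. The transition maps of `S_{m,∞}` starting in degrees `≥ m` are
isomorphisms, so once the image is everything in some degree it stays so in all higher degrees.
As `f` is mono and `U ≠ 0` the image is nonzero somewhere; hence it is either everything, or
everything exactly from the least degree `n` in which it is nonzero. -/

open CategoryTheory CategoryTheory.Limits

set_option linter.unusedVariables false

variable {k : Type} [Field k]

variable (k)

section NatTransRange

variable {C : Type*} [Category C] {R : Type*} [Ring R] {U V : C ⥤ ModuleCat R}

lemma NatTrans.range_app_eq_top_of_surjective (f : U ⟶ V) {i j : C} (g : i ⟶ j)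
    (hg : Function.Surjective (V.map g).hom) (hi : LinearMap.range (f.app i).hom = ⊤) :
    LinearMap.range (f.app j).hom = ⊤ := by
  rw [eq_top_iff]
  rintro y -
  obtain ⟨x, rfl⟩ := hg y
  obtain ⟨u, rfl⟩ : x ∈ LinearMap.range (f.app i).hom := hi ▸ Submodule.mem_top
  exact ⟨(U.map g).hom u, congrArg (fun φ => φ.hom u) (f.naturality g)⟩

lemma NatTrans.exists_range_app_ne_bot (f : U ⟶ V) [hf : Mono f] (hU : ¬ IsZero U) :
    ∃ i, LinearMap.range (f.app i).hom ≠ ⊥ := by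
  obtain ⟨i, hi⟩ : ∃ i, ¬ IsZero (U.obj i) := not_forall.1 (mt U.isZero hU)
  have : Nontrivial (U.obj i) :=
    not_subsingleton_iff_nontrivial.1 fun _ => hi (ModuleCat.isZero_of_subsingleton _)
  obtain ⟨u, hu⟩ := exists_ne (0 : U.obj i)
  have hinj : Function.Injective (f.app i).hom :=
    (ModuleCat.mono_iff_injective _).1 ((NatTrans.mono_iff_mono_app f).1 hf i)
  refine ⟨i, fun h => hu (hinj ?_)⟩
  rw [LinearMap.range_eq_bot.1 h, map_zero, LinearMap.zero_apply]

end NatTransRange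

section Sab

variable {k} {a : WithBot ℤ} {b : WithTop ℤ} {i : ℤ}

lemma SabObj_eq_top (h : a ≤ (i : WithBot ℤ) ∧ (i : WithTop ℤ) ≤ b) : SabObj k a b i = ⊤ :=
  if_pos h

lemma subsingleton_SabObj (h : ¬ (a ≤ (i : WithBot ℤ) ∧ (i : WithTop ℤ) ≤ b)) :
    Subsingleton (SabObj k a b i) :=
  ⟨fun x y => Subtype.ext ((SabObj_coe_eq_zero k h x).trans (SabObj_coe_eq_zero k h y).symm)⟩

lemma isSimpleModule_SabObj (h : a ≤ (i : WithBot ℤ) ∧ (i : WithTop ℤ) ≤ b) :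
    IsSimpleModule k (SabObj k a b i) :=
  IsSimpleModule.congr ((LinearEquiv.ofEq _ _ (SabObj_eq_top h)).trans Submodule.topEquiv)

lemma SabObj_submodule_eq_bot_or_eq_top (p : Submodule k (SabObj k a b i)) : p = ⊥ ∨ p = ⊤ := by
  by_cases h : a ≤ (i : WithBot ℤ) ∧ (i : WithTop ℤ) ≤ b
  · have := isSimpleModule_SabObj (k := k) h
    exact eq_bot_or_eq_top p
  · have := subsingleton_SabObj (k := k) h
    exact Or.inl (Subsingleton.elim _ _)

lemma SabMap_surjective {j : ℤ} (hai : a ≤ (i : WithBot ℤ)) (hij : i ≤ j) :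
    Function.Surjective (SabMap k a b i j) := by
  by_cases hj : a ≤ (j : WithBot ℤ) ∧ (j : WithTop ℤ) ≤ b
  · have hi : a ≤ (i : WithBot ℤ) ∧ (i : WithTop ℤ) ≤ b :=
      ⟨hai, le_trans (WithTop.coe_le_coe.2 hij) hj.2⟩
    have hc : ∏ n ∈ Finset.Ico i j, (-1 : k) ^ n ≠ 0 :=
      Finset.prod_ne_zero_iff.2 fun n _ => zpow_ne_zero n (neg_ne_zero.2 one_ne_zero)
    intro y
    refine ⟨⟨(∏ n ∈ Finset.Ico i j, (-1 : k) ^ n)⁻¹ * y, by rw [SabObj_eq_top hi]; trivial⟩, ?_⟩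
    ext
    simp [SabMap, hj, mul_inv_cancel_left₀ hc]
  · have := subsingleton_SabObj (k := k) hj
    exact fun y => ⟨0, Subsingleton.elim _ _⟩

end Sab

/-- For every `m ∈ ℤ ∪ {−∞}`, every nonzero subobject of `S_{m,∞}` in `S` (given by a
monomorphism `f : U ⟶ S_{m,∞}`) is either `S_{m,∞}` itself or equal to the canonical
subobject of `S_{m,∞}` consisting of the components in degrees `≥ n` (which is isomorphic
to `S_{n,∞}`) for some integer `n ≥ m`; here the subobject is identified through the
componentwise ranges of `f`. -/
theorem subobject_of_Sminfty (m : WithBot ℤ) (U : SeqCat k)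
    (f : U ⟶ Sab k m (⊤ : WithTop ℤ)) (hf : Mono f) (hU : ¬ IsZero U) :
    (∀ i : ℤ, LinearMap.range (f.app i).hom = ⊤) ∨
      ∃ n : ℤ, m ≤ (n : WithBot ℤ) ∧
        (∀ i : ℤ, LinearMap.range (f.app i).hom = if n ≤ i then ⊤ else ⊥) := by
  classical
  have upward {i j : ℤ} (hmi : m ≤ (i : WithBot ℤ)) (hij : i ≤ j)
      (hi : LinearMap.range (f.app i).hom = ⊤) : LinearMap.range (f.app j).hom = ⊤ :=
    NatTrans.range_app_eq_top_of_surjective f (homOfLE hij) (SabMap_surjective hmi hij) hi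
  have top_of_ne_bot {i : ℤ} (hi : LinearMap.range (f.app i).hom ≠ ⊥) :
      m ≤ (i : WithBot ℤ) ∧ LinearMap.range (f.app i).hom = ⊤ :=
    ⟨by_contra fun h =>
      hi (have : Subsingleton ((Sab k m ⊤).obj i) := subsingleton_SabObj fun h' => h h'.1
        Subsingleton.elim _ _),
      (SabObj_submodule_eq_bot_or_eq_top _).resolve_left hi⟩
  by_cases hall : ∀ i : ℤ, LinearMap.range (f.app i).hom = ⊤
  · exact Or.inl hall
  obtain ⟨i₀, hi₀⟩ := not_forall.1 hall
  have bdd (i : ℤ) (hi : LinearMap.range (f.app i).hom ≠ ⊥) : i₀ + 1 ≤ i := by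
    by_contra! hii₀
    exact hi₀ (upward (top_of_ne_bot hi).1 (by omega) (top_of_ne_bot hi).2)
  obtain ⟨n, hn, hleast⟩ :=
    Int.exists_least_of_bdd ⟨i₀ + 1, bdd⟩ (NatTrans.exists_range_app_ne_bot f (hf := hf) hU)
  obtain ⟨hmn, hn_top⟩ := top_of_ne_bot hn
  refine Or.inr ⟨n, hmn, fun i => ?_⟩
  split_ifs with hni
  · exact upward hmn hni hn_top
  · exact not_not.1 fun hi => hni (hleast i hi)
end

section
/- The object T^{≤0} of S is not completely decomposable: T^{≤0} is not isomorphic to any coproduct of objects of the form S_{a,b} with a ∈ ℤ ∪ {−∞}, b ∈ ℤ ∪ {∞}, a ≤ b. -/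
open CategoryTheory CategoryTheory.Limits

set_option linter.unusedVariables false

variable {k : Type} [Field k]

variable (k)

/-- The right-shift operator on `k^ℕ`: `(c_0, c_1, …) ↦ (0, c_0, c_1, …)`. -/
def rightShift : (ℕ → k) →ₗ[k] (ℕ → k) where
  toFun x := fun m => if m = 0 then 0 else x (m - 1)
  map_add' x y := by
    funext m
    by_cases h : m = 0 <;> simp [h]
  map_smul' c x := by
    funext m
    by_cases h : m = 0 <;> simp [h]

/-- The component in degree `i` of the object `T^{≤0}`, as a submodule of `k^ℕ`:
it is all of `k^ℕ` for `i ≤ 0` and `0` for `i > 0`. -/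
def TleObj (i : ℤ) : Submodule k (ℕ → k) :=
  if i ≤ 0 then ⊤ else ⊥

/-- The transition maps of `T^{≤0}`: from degree `i` to degree `j ≥ i` (within degrees
`≤ 0`) it is the `(j−i)`-fold right-shift `(c_0, c_1, …) ↦ (0, …, 0, c_0, c_1, …)`,
and `0` into positive degrees. -/
def TleMap (i j : ℤ) : ↥(TleObj k i) →ₗ[k] ↥(TleObj k j) where
  toFun x :=
    if h : j ≤ 0 then
      ⟨(rightShift k ^ (j - i).toNat) (x : ℕ → k), by rw [TleObj, if_pos h]; trivial⟩
    else 0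
  map_add' x y := by
    by_cases h : j ≤ 0
    · simp only [dif_pos h]
      ext
      simp
    · simp only [dif_neg h, add_zero]
  map_smul' c x := by
    by_cases h : j ≤ 0
    · simp only [dif_pos h, RingHom.id_apply]
      ext
      simp
    · simp only [dif_neg h, smul_zero, RingHom.id_apply]

lemma TleObj_coe_eq_zero {i : ℤ} (h : ¬ i ≤ 0) (x : ↥(TleObj k i)) : (x : ℕ → k) = 0 := by
  have hm := x.2
  have he : TleObj k i = ⊥ := if_neg h
  exact (Submodule.eq_bot_iff _).1 he _ hm

lemma TleMap_id (i : ℤ) : TleMap k i i = LinearMap.id := by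
  apply LinearMap.ext
  intro x
  by_cases h : i ≤ 0
  · apply Subtype.ext
    simp [TleMap, h]
  · apply Subtype.ext
    simp [TleMap, h, TleObj_coe_eq_zero k h x]

lemma TleMap_comp {i j l : ℤ} (hij : i ≤ j) (hjl : j ≤ l) :
    (TleMap k j l).comp (TleMap k i j) = TleMap k i l := by
  apply LinearMap.ext
  intro x
  by_cases hl : l ≤ 0
  · have hj : j ≤ 0 := le_trans hjl hl
    apply Subtype.ext
    simp only [LinearMap.comp_apply, TleMap, LinearMap.coe_mk, AddHom.coe_mk,
      dif_pos hl, dif_pos hj]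
    have hn : (l - j).toNat + (j - i).toNat = (l - i).toNat := by omega
    rw [← hn, pow_add]
    simp [Module.End.mul_apply]
  · apply Subtype.ext
    simp [TleMap, hl]

/-- The object `T^{≤0}` of `S`: its component in degree `i` is `k^ℕ` for `i ≤ 0` and `0`
for `i > 0`, and its transition maps are the right-shift `(c_0, c_1, …) ↦ (0, c_0, c_1, …)`
for `i < 0` and the zero map for `i ≥ 0`. -/
def Tle : SeqCat k where
  obj i := ModuleCat.of k (TleObj k i)
  map {i j} f := ModuleCat.ofHom (TleMap k i j)
  map_id i := ModuleCat.hom_ext (TleMap_id k i)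
  map_comp {i j l} f g := ModuleCat.hom_ext (TleMap_comp k (leOfHom f) (leOfHom g)).symm

/-!
For a sequence `V`, let `F_n ⊆ V⁰` be the image of `V^{-n} → V⁰`. Morphisms respect this
filtration, so an isomorphism identifies the filtrations in degree 0. For `T^{≤0}`, `F_n` consists
of the sequences vanishing in their first `n` entries: each `F_n` has finite codimension,
`⋂ F_n = 0`, and `k^ℕ` has uncountable dimension.

In a coproduct of the `S_{a_j,b_j}`, degree 0 is spanned by the generators `e_j` of the summands
with `a_j ≤ 0 ≤ b_j`. The generator `e_j` lies in `F_n` when `a_j ≤ -n`, while the `e_j` with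
`a_j > -n` stay linearly independent modulo `F_n`. Finite codimension therefore leaves only finitely
many `j` with `a_j > -n`, and `⋂ F_n = 0` rules out `a_j = -∞`; so there are only countably many
generators, and degree 0 has countable dimension.
-/

namespace SeqCat

variable {k}

noncomputable def imageFiltration (V : SeqCat k) (n : ℕ) : Submodule k (V.obj 0) :=
  LinearMap.range (V.map (homOfLE (by omega : -(n : ℤ) ≤ 0))).hom

lemma map_imageFiltration_le {V W : SeqCat k} (f : V ⟶ W) (n : ℕ) :
    (V.imageFiltration n).map (f.app 0).hom ≤ W.imageFiltration n := by
  rintro _ ⟨_, ⟨x, rfl⟩, rfl⟩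
  exact ⟨f.app _ x, (ConcreteCategory.congr_hom (f.naturality _) x).symm⟩

lemma finite_quotient_imageFiltration_of_surjective {V W : SeqCat k} (f : V ⟶ W)
    (hf : Function.Surjective (f.app 0)) (n : ℕ)
    [Module.Finite k (V.obj 0 ⧸ V.imageFiltration n)] :
    Module.Finite k (W.obj 0 ⧸ W.imageFiltration n) :=
  Module.Finite.of_surjective (Submodule.mapQ _ _ (f.app 0).hom
      (Submodule.map_le_iff_le_comap.mp (map_imageFiltration_le f n)))
    (by
      rintro ⟨y⟩
      obtain ⟨x, rfl⟩ := hf y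
      exact ⟨Submodule.Quotient.mk x, rfl⟩)

lemma iInf_imageFiltration_eq_bot_of_injective {V W : SeqCat k} (f : V ⟶ W)
    (hf : Function.Injective (f.app 0)) (hW : ⨅ n, W.imageFiltration n = ⊥) :
    ⨅ n, V.imageFiltration n = ⊥ := by
  rw [eq_bot_iff] at hW ⊢
  intro x hx
  have hfx : f.app 0 x ∈ ⨅ n, W.imageFiltration n :=
    Submodule.mem_iInf _ |>.mpr fun n =>
      map_imageFiltration_le f n ⟨x, Submodule.mem_iInf _ |>.mp hx n, rfl⟩
  exact (Submodule.mem_bot k).mpr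
    ((injective_iff_map_eq_zero (f.app 0).hom).mp hf x ((Submodule.mem_bot k).mp (hW hfx)))

end SeqCat

lemma ModuleCat.eq_top_of_forall_ι_mem {R : Type*} [Ring R] {J : Type*} [Category J]
    {F : J ⥤ ModuleCat R} {c : Cocone F} (hc : IsColimit c) (N : Submodule R c.pt)
    (hN : ∀ j x, c.ι.app j x ∈ N) : N = ⊤ := by
  have hq : ModuleCat.ofHom N.mkQ = 0 := hc.hom_ext fun j => by
    ext x
    simpa using hN j x
  rw [eq_top_iff]
  intro x _
  simpa using congrArg (fun g => g.hom x) hq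

namespace Sab

variable {k} {a : WithBot ℤ} {b : WithTop ℤ} {i : ℤ}

lemma obj_eq_top (h : a ≤ (i : WithBot ℤ) ∧ (i : WithTop ℤ) ≤ b) : SabObj k a b i = ⊤ :=
  if_pos h

noncomputable def coord : (Sab k a b).obj i →ₗ[k] k := (SabObj k a b i).subtype

lemma coord_injective : Function.Injective (coord : (Sab k a b).obj i →ₗ[k] k) :=
  Subtype.val_injective

lemma eq_zero_of_outside (h : ¬ (a ≤ (i : WithBot ℤ) ∧ (i : WithTop ℤ) ≤ b))
    (x : (Sab k a b).obj i) : x = 0 :=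
  coord_injective (SabObj_coe_eq_zero k h x)

noncomputable def one (h : a ≤ (i : WithBot ℤ) ∧ (i : WithTop ℤ) ≤ b) : (Sab k a b).obj i :=
  (⟨1, by rw [obj_eq_top h]; trivial⟩ : SabObj k a b i)

@[simp]
lemma coord_one (h : a ≤ (i : WithBot ℤ) ∧ (i : WithTop ℤ) ≤ b) : coord (one (k := k) h) = 1 :=
  rfl

lemma eq_smul_one (h : a ≤ (i : WithBot ℤ) ∧ (i : WithTop ℤ) ≤ b) (x : (Sab k a b).obj i) :
    x = coord x • one h :=
  coord_injective (by simp)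

lemma coord_map {j : ℤ} (hij : i ≤ j) (hj : a ≤ (j : WithBot ℤ) ∧ (j : WithTop ℤ) ≤ b)
    (x : (Sab k a b).obj i) :
    coord ((Sab k a b).map (homOfLE hij) x) = (∏ m ∈ Finset.Ico i j, (-1 : k) ^ m) * coord x := by
  change (SabMap k a b i j x : k) = _
  simp only [SabMap, LinearMap.coe_mk, AddHom.coe_mk, dif_pos hj]
  rfl

lemma map_surjective {j : ℤ} (hij : i ≤ j) (ha : a ≤ (i : WithBot ℤ))
    (hb : (j : WithTop ℤ) ≤ b) : Function.Surjective ((Sab k a b).map (homOfLE hij)) := by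
  have hi : a ≤ (i : WithBot ℤ) ∧ (i : WithTop ℤ) ≤ b := ⟨ha, le_trans (by exact_mod_cast hij) hb⟩
  have hj : a ≤ (j : WithBot ℤ) ∧ (j : WithTop ℤ) ≤ b := ⟨le_trans ha (by exact_mod_cast hij), hb⟩
  have hc : (∏ m ∈ Finset.Ico i j, (-1 : k) ^ m) ≠ 0 :=
    Finset.prod_ne_zero_iff.mpr fun m _ => zpow_ne_zero m (neg_ne_zero.mpr one_ne_zero)
  intro y
  refine ⟨((∏ m ∈ Finset.Ico i j, (-1 : k) ^ m)⁻¹ * coord y) • one hi, coord_injective ?_⟩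
  rw [coord_map hij hj, map_smul, coord_one, smul_eq_mul, mul_one, mul_inv_cancel_left₀ hc]

lemma imageFiltration_eq_top {n : ℕ}
    (ha : a ≤ ((-n : ℤ) : WithBot ℤ)) (hb : ((0 : ℤ) : WithTop ℤ) ≤ b) :
    (Sab k a b).imageFiltration n = ⊤ :=
  LinearMap.range_eq_top.mpr (map_surjective _ ha hb)

lemma imageFiltration_eq_bot {n : ℕ}
    (ha : ¬ a ≤ ((-n : ℤ) : WithBot ℤ)) : (Sab k a b).imageFiltration n = ⊥ := by
  rw [eq_bot_iff]
  rintro _ ⟨x, rfl⟩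
  simp [eq_zero_of_outside (fun h => ha h.1) x]

end Sab

section Coproduct

variable {ι : Type} (a : ι → WithBot ℤ) (b : ι → WithTop ℤ)

noncomputable abbrev sigmaSab : SeqCat k := ∐ fun j : ι => Sab k (a j) (b j)

abbrev ZeroSupport : Type := {j : ι // a j ≤ ((0 : ℤ) : WithBot ℤ) ∧ ((0 : ℤ) : WithTop ℤ) ≤ b j}

noncomputable def sigmaGen (j : ZeroSupport a b) : (sigmaSab k a b).obj 0 :=
  (Sigma.ι (fun j : ι => Sab k (a j) (b j)) j.1).app 0 (Sab.one j.2)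

lemma span_range_sigmaGen : Submodule.span k (Set.range (sigmaGen k a b)) = ⊤ := by
  refine ModuleCat.eq_top_of_forall_ι_mem
    (isColimitOfPreserves ((evaluation ℤ (ModuleCat k)).obj 0) (colimit.isColimit _)) _ ?_
  rintro ⟨j⟩ (x : (Sab k (a j) (b j)).obj 0)
  change (Sigma.ι (fun j : ι => Sab k (a j) (b j)) j).app 0 x ∈ _
  by_cases h : a j ≤ ((0 : ℤ) : WithBot ℤ) ∧ ((0 : ℤ) : WithTop ℤ) ≤ b j
  · rw [Sab.eq_smul_one h x, map_smul]
    exact Submodule.smul_mem _ _ (Submodule.subset_span ⟨⟨j, h⟩, rfl⟩)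
  · rw [Sab.eq_zero_of_outside h x, map_zero]
    exact Submodule.zero_mem _

lemma sigmaGen_mem_imageFiltration (j : ZeroSupport a b) {n : ℕ}
    (h : a j ≤ ((-n : ℤ) : WithBot ℤ)) :
    sigmaGen k a b j ∈ (sigmaSab k a b).imageFiltration n :=
  SeqCat.map_imageFiltration_le (Sigma.ι _ j.1) n
    ⟨_, by rw [Sab.imageFiltration_eq_top h j.2.2]; trivial, rfl⟩

lemma coord_sigma_π_sigmaGen [DecidableEq ι] (j : ZeroSupport a b) (l : ι) :
    Sab.coord ((Sigma.π (fun j : ι => Sab k (a j) (b j)) l).app 0 (sigmaGen k a b j)) =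
      if j.1 = l then 1 else 0 := by
  change Sab.coord ((Sigma.ι _ j.1 ≫ Sigma.π (fun j : ι => Sab k (a j) (b j)) l).app 0
    (Sab.one j.2)) = _
  by_cases h : j.1 = l
  · subst h
    simp
  · simp [Sigma.ι_π_of_ne _ h, h]

lemma linearIndependent_mkQ_sigmaGen (n : ℕ) :
    LinearIndependent k fun j : {j : ZeroSupport a b // ¬ a j.1 ≤ ((-n : ℤ) : WithBot ℤ)} =>
      ((sigmaSab k a b).imageFiltration n).mkQ (sigmaGen k a b j.1) := by
  classical
  set C := sigmaSab k a b
  -- the projections onto the summands with `a j > -n` kill `F_n`, so they are coordinates on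
  -- the quotient in which the generators become the standard basis vectors
  let coords : C.obj 0 →ₗ[k]
      ({j : ZeroSupport a b // ¬ a j.1 ≤ ((-n : ℤ) : WithBot ℤ)} → k) :=
    LinearMap.pi fun l => Sab.coord ∘ₗ ((Sigma.π (fun j : ι => Sab k (a j) (b j)) l.1.1).app 0).hom
  have hle : C.imageFiltration n ≤ LinearMap.ker coords := by
    intro w hw
    ext l
    have := SeqCat.map_imageFiltration_le (Sigma.π _ l.1.1) n ⟨w, hw, rfl⟩
    rw [Sab.imageFiltration_eq_bot l.2] at this
    simp [coords, (Submodule.mem_bot k).mp this]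
  refine LinearIndependent.of_comp ((C.imageFiltration n).liftQ coords hle) ?_
  have hsingle : (C.imageFiltration n).liftQ coords hle ∘
      (fun j : {j : ZeroSupport a b // ¬ a j.1 ≤ ((-n : ℤ) : WithBot ℤ)} =>
        (C.imageFiltration n).mkQ (sigmaGen k a b j.1)) = fun j => Pi.single j 1 := by
    ext j l
    change Sab.coord ((Sigma.π (fun j : ι => Sab k (a j) (b j)) l.1.1).app 0
      (sigmaGen k a b j.1)) = Pi.single (M := fun _ => k) j 1 l
    rw [coord_sigma_π_sigmaGen, Pi.single_apply]
    simp [Subtype.ext_iff, eq_comm]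
  rw [hsingle]
  exact Pi.linearIndependent_single_one _ k

lemma countable_zeroSupport
    (hfin : ∀ n, Module.Finite k ((sigmaSab k a b).obj 0 ⧸
      (sigmaSab k a b).imageFiltration n))
    (hsep : ⨅ n, (sigmaSab k a b).imageFiltration n = ⊥) :
    Countable (ZeroSupport a b) := by
  have hfinite (n : ℕ) :
      {j : ZeroSupport a b | ¬ a j.1 ≤ ((-n : ℤ) : WithBot ℤ)}.Finite :=
    Set.finite_coe_iff.mp (linearIndependent_mkQ_sigmaGen k a b n).finite
  have hcover (j : ZeroSupport a b) : ∃ n : ℕ, ¬ a j.1 ≤ ((-n : ℤ) : WithBot ℤ) := by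
    by_contra! h
    have hmem : sigmaGen k a b j ∈ ⨅ n, (sigmaSab k a b).imageFiltration n :=
      Submodule.mem_iInf _ |>.mpr fun n => sigmaGen_mem_imageFiltration k a b j (h n)
    rw [hsep, Submodule.mem_bot] at hmem
    classical
    simpa [hmem] using coord_sigma_π_sigmaGen k a b j j.1
  exact Set.countable_univ_iff.mp <| (Set.countable_iUnion fun n => (hfinite n).countable).mono
    fun j _ => Set.mem_iUnion.mpr (hcover j)

lemma rank_sigma_obj_zero_le_aleph0
    (hfin : ∀ n, Module.Finite k ((sigmaSab k a b).obj 0 ⧸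
      (sigmaSab k a b).imageFiltration n))
    (hsep : ⨅ n, (sigmaSab k a b).imageFiltration n = ⊥) :
    Module.rank k ((sigmaSab k a b).obj 0) ≤ Cardinal.aleph0 := by
  have := countable_zeroSupport k a b hfin hsep
  calc Module.rank k ((sigmaSab k a b).obj 0)
      = Module.rank k (Submodule.span k (Set.range (sigmaGen k a b))) := by
        rw [span_range_sigmaGen, rank_top]
    _ ≤ Cardinal.mk (Set.range (sigmaGen k a b)) := rank_span_le _
    _ ≤ Cardinal.mk (ZeroSupport a b) := Cardinal.mk_range_le
    _ ≤ Cardinal.aleph0 := Cardinal.mk_le_aleph0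

end Coproduct

lemma rightShift_pow_apply (n : ℕ) (x : ℕ → k) (m : ℕ) :
    (rightShift k ^ n) x m = if m < n then 0 else x (m - n) := by
  induction n generalizing m with
  | zero => simp
  | succ n ih =>
    rw [pow_succ', Module.End.mul_apply]
    change (if m = 0 then 0 else (rightShift k ^ n) x (m - 1)) = _
    rcases Nat.eq_zero_or_pos m with rfl | hm
    · simp
    · rw [if_neg hm.ne', ih]
      by_cases h : m - 1 < n
      · rw [if_pos h, if_pos (by omega)]
      · rw [if_neg h, if_neg (by omega), Nat.sub_sub, Nat.add_comm 1 n]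

namespace Tle

variable {k} in
def coord {i : ℤ} : (Tle k).obj i →ₗ[k] (ℕ → k) := (TleObj k i).subtype

lemma coord_injective {i : ℤ} : Function.Injective (coord : (Tle k).obj i →ₗ[k] (ℕ → k)) :=
  Subtype.val_injective

lemma mem_imageFiltration_iff (n : ℕ) (x : (Tle k).obj 0) :
    x ∈ (Tle k).imageFiltration n ↔ ∀ m < n, coord x m = 0 := by
  have hmap (y : (Tle k).obj (-(n : ℤ))) :
      coord (((Tle k).map (homOfLE (by omega : -(n : ℤ) ≤ 0))).hom y) =
        (rightShift k ^ n) (coord y) := by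
    change ((TleMap k (-(n : ℤ)) 0 y : TleObj k 0) : ℕ → k) = _
    simp only [TleMap, LinearMap.coe_mk, AddHom.coe_mk, dif_pos le_rfl,
      show ((0 : ℤ) - -(n : ℤ)).toNat = n by omega]
    rfl
  constructor
  · rintro ⟨y, rfl⟩ m hm
    rw [hmap, rightShift_pow_apply, if_pos hm]
  · intro hx
    have hmem : (fun m => coord x (m + n)) ∈ TleObj k (-(n : ℤ)) := by
      rw [TleObj, if_pos (by omega)]; trivial
    let y : (Tle k).obj (-(n : ℤ)) := (⟨_, hmem⟩ : TleObj k (-(n : ℤ)))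
    refine ⟨y, coord_injective k ?_⟩
    rw [hmap, show coord y = fun m => coord x (m + n) from rfl]
    funext m
    rw [rightShift_pow_apply]
    split_ifs with hm
    · exact (hx m hm).symm
    · simp [coord, Nat.sub_add_cancel (Nat.le_of_not_lt hm)]

instance finite_quotient_imageFiltration (n : ℕ) :
    Module.Finite k ((Tle k).obj 0 ⧸ (Tle k).imageFiltration n) := by
  let restrict : (Tle k).obj 0 →ₗ[k] (Fin n → k) :=
    LinearMap.funLeft k k Fin.val ∘ₗ coord
  have hker : (Tle k).imageFiltration n = LinearMap.ker restrict := by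
    ext x
    rw [mem_imageFiltration_iff, LinearMap.mem_ker, funext_iff]
    exact ⟨fun h t => h t t.2, fun h m hm => h ⟨m, hm⟩⟩
  rw [hker]
  exact Module.Finite.equiv restrict.quotKerEquivRange.symm

lemma iInf_imageFiltration_eq_bot : ⨅ n, (Tle k).imageFiltration n = ⊥ := by
  rw [eq_bot_iff]
  intro x hx
  rw [Submodule.mem_bot]
  refine coord_injective k (funext fun m => ?_)
  exact (mem_imageFiltration_iff k (m + 1) x).mp (Submodule.mem_iInf _ |>.mp hx _) m m.lt_succ_self

lemma aleph0_lt_rank_obj_zero : Cardinal.aleph0 < Module.rank k ((Tle k).obj 0) := by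
  have htop : TleObj k 0 = ⊤ := if_pos le_rfl
  change Cardinal.aleph0 < Module.rank k (TleObj k 0)
  rw [htop, rank_top, rank_fun_infinite, Cardinal.mk_arrow, Cardinal.lift_id, Cardinal.lift_id,
    Cardinal.mk_nat]
  calc Cardinal.aleph0 < 2 ^ Cardinal.aleph0 := Cardinal.cantor _
    _ ≤ Cardinal.mk k ^ Cardinal.aleph0 :=
      Cardinal.power_le_power_right (Cardinal.two_le_iff.mpr ⟨0, 1, zero_ne_one⟩)

end Tle

/-- The object `T^{≤0}` of `S` is not completely decomposable: it is not isomorphic to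
any coproduct of objects of the form `S_{a,b}` with `a ∈ ℤ ∪ {−∞}`, `b ∈ ℤ ∪ {∞}`,
`a ≤ b`. -/
theorem Tle_not_completely_decomposable :
    ¬ ∃ (ι : Type) (a : ι → WithBot ℤ) (b : ι → WithTop ℤ),
        (∀ j, SabLE (a j) (b j)) ∧
        Nonempty (Tle k ≅ ∐ fun j : ι => Sab k (a j) (b j)) := by
  rintro ⟨ι, a, b, -, ⟨e⟩⟩
  have hfin (n : ℕ) := SeqCat.finite_quotient_imageFiltration_of_surjective e.hom
    (e.app 0).toLinearEquiv.surjective n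
  have hsep := SeqCat.iInf_imageFiltration_eq_bot_of_injective e.inv
    (e.app 0).symm.toLinearEquiv.injective (Tle.iInf_imageFiltration_eq_bot k)
  exact ((Tle.aleph0_lt_rank_obj_zero k).trans_eq (e.app 0).toLinearEquiv.rank_eq).not_ge
    (rank_sigma_obj_zero_le_aleph0 k a b hfin hsep)
end
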